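/- arXiv:2008.11684 — 4 statements merged into one kernel-verified Lean document; each statement's English description precedes it below -/
import Mathlib

section
/- Let φ : A → B be a surjective homomorphism of (unital, possibly noncommutative) rings whose kernel J satisfies J·J = 0. Let ẽ ∈ A be an idempotent and set e := φ(ẽ). Suppose f, g ∈ B satisfy fgf = f, gfg = g and gf = e. Then there exist f̃, g̃ ∈ A with φ(f̃) = f, φ(g̃) = g, f̃g̃f̃ = f̃, g̃f̃g̃ = g̃ and g̃f̃ = ẽ. -/
/-- Lifting partial isomorphisms with prescribed source along a
square-zero surjection.  If `φ : A → B` is surjective with square-zero kernel,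
`et` is an idempotent of `A` with image `e = φ et`, and `f, g ∈ B` satisfy
`fgf = f`, `gfg = g`, `gf = e`, then `(f, g)` lifts to a partial isomorphism
`(f', g')` of `A` with source `et`. -/
theorem partial_iso_lift {A B : Type*} [Ring A] [Ring B] (φ : A →+* B)
    (hφ : Function.Surjective φ)
    (hJ : ∀ x y : A, φ x = 0 → φ y = 0 → x * y = 0)
    (et : A) (het : IsIdempotentElem et)
    (f g : B) (hf : f * g * f = f) (hg : g * f * g = g) (hgf : g * f = φ et) :
    ∃ f' g' : A, φ f' = f ∧ φ g' = g ∧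
      f' * g' * f' = f' ∧ g' * f' * g' = g' ∧ g' * f' = et := by
  obtain ⟨f₀, hf₀⟩ := hφ f
  obtain ⟨g₀, hg₀⟩ := hφ g
  obtain ⟨f', hf'def⟩ : ∃ x, x = f₀ * et := ⟨_, rfl⟩
  obtain ⟨g₁, hg₁def⟩ : ∃ x, x = et * g₀ := ⟨_, rfl⟩
  have hφf' : φ f' = f := by
    rw [hf'def, map_mul, hf₀, ← hgf, ← mul_assoc, hf]
  have hφg₁ : φ g₁ = g := by
    rw [hg₁def, map_mul, hg₀, ← hgf, hg]
  obtain ⟨u, hudef⟩ : ∃ x, x = g₁ * f' - et := ⟨_, rfl⟩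
  have hφu : φ u = 0 := by
    rw [hudef, map_sub, map_mul, hφf', hφg₁, hgf, sub_self]
  have hf'et : f' * et = f' := by
    rw [hf'def, mul_assoc, het]
  have hetg₁ : et * g₁ = g₁ := by
    rw [hg₁def, ← mul_assoc, het]
  have huet : u * et = u := by
    rw [hudef, sub_mul, mul_assoc, hf'et, het]
  have hetu : et * u = u := by
    rw [hudef, mul_sub, ← mul_assoc, hetg₁, het]
  have huu : u * u = 0 := hJ u u hφu hφu
  obtain ⟨g', hg'def⟩ : ∃ x, x = g₁ - u * g₁ := ⟨_, rfl⟩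
  have hφg' : φ g' = g := by
    rw [hg'def, map_sub, map_mul, hφu, zero_mul, sub_zero, hφg₁]
  have hg₁f' : g₁ * f' = et + u := by rw [hudef]; abel
  have hg'f' : g' * f' = et := by
    rw [hg'def, sub_mul, mul_assoc, hg₁f', mul_add, huet, huu, add_zero]
    abel
  have hetg' : et * g' = g' := by
    rw [hg'def, mul_sub, hetg₁, ← mul_assoc, hetu]
  exact ⟨f', g', hφf', hφg', by rw [mul_assoc, hg'f', hf'et],
    by rw [mul_assoc, ← mul_assoc g', hg'f', hetg'], hg'f'⟩
end

section
/- Let B be a (unital, possibly noncommutative) ring, let r₀, …, rₙ be positive natural numbers with n ≥ 1, set N = r₀ + ⋯ + rₙ, and fix 1 ≤ j ≤ n. A matrix x ∈ Mat_N(B) is block upper triangular for the partition (r₀, r₁, …, rₙ) if and only if x is block upper triangular for the coarser partition (r₀, r₁+⋯+r_j, r_{j+1}, …, rₙ) and the top-left corner of x of size (r₀+⋯+r_j) × (r₀+⋯+r_j) is block upper triangular for the partition (r₀, …, r_j). Equivalently, the commutative square of ring homomorphisms formed by the inclusion T(r₀,…,rₙ)(B) ⊆ T(r₀, r₁+⋯+r_j,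 r_{j+1},…,rₙ)(B), the top-left-corner projections to T(r₀,…,r_j)(B) and T(r₀, r₁+⋯+r_j)(B), and the inclusion T(r₀,…,r_j)(B) ⊆ T(r₀, r₁+⋯+r_j)(B), is a pullback square of rings. -/
/-!
The block index of an entry for the coarse partition is a monotone function of its block index
for the fine one, collapsing fine blocks `1, …, j` to coarse block `1`.  Hence fine triangularity
implies coarse triangularity, and the two conditions differ only on pairs of indices lying in fine
blocks `1, …, j`.  Those indices lie in the top-left corner, where the block indices for
`(r 0, …, r j)` and `(r 0, …, r n)` agree.
-/

/-- `prefSum r i = r 0 + r 1 + ⋯ + r (i-1)`. -/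
def prefSum (r : ℕ → ℕ) (i : ℕ) : ℕ := ∑ k ∈ Finset.range i, r k

/-- The block containing the index `a`, for the partition with `m + 1` blocks of sizes
`r 0, …, r m`: the number of `i ≤ m` with `r 0 + ⋯ + r i ≤ a`.  (For positive sizes,
indices `0, …, r 0 − 1` are in block `0`, the next `r 1` indices in block `1`, etc.) -/
def blk (m : ℕ) (r : ℕ → ℕ) (a : ℕ) : ℕ :=
  ((Finset.range (m + 1)).filter (fun i => prefSum r (i + 1) ≤ a)).card

/-- `x` is block upper triangular for the partition with `m + 1` blocks of sizes
`r 0, …, r m`: the entry `x a b` vanishes whenever the block of `a` is strictly below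
the block of `b`. -/
def IsBlockUpperTriangular {B : Type*} [Ring B] {N : ℕ} (m : ℕ) (r : ℕ → ℕ)
    (x : Matrix (Fin N) (Fin N) B) : Prop :=
  ∀ a b : Fin N, blk m r (b : ℕ) < blk m r (a : ℕ) → x a b = 0

/-- The sizes of the coarser partition `(r 0, r 1 + ⋯ + r j, r (j+1), …, r n)`
obtained by merging blocks `1, …, j`. -/
def mergedSizes (r : ℕ → ℕ) (j : ℕ) : ℕ → ℕ := fun i =>
  if i = 0 then r 0
  else if i = 1 then ∑ k ∈ Finset.Icc 1 j, r k
  else r (i + j - 1)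

open Finset in
lemma Finset.lt_card_filter_range_iff {p : ℕ → Prop} [DecidablePred p] (hp : Antitone p)
    (n i : ℕ) : i < #{k ∈ range n | p k} ↔ i < n ∧ p i := by
  constructor
  · intro hi
    by_contra hni
    have hsub : {k ∈ range n | p k} ⊆ range i := fun k hk => by
      simp only [mem_filter, mem_range] at hk ⊢
      by_contra hik
      exact hni ⟨by omega, hp (not_lt.mp hik) hk.2⟩
    have := card_le_card hsub
    rw [card_range] at this
    omega
  · rintro ⟨hin, hpi⟩
    have hsub : range (i + 1) ⊆ {k ∈ range n | p k} := fun k hk => by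
      simp only [mem_filter, mem_range] at hk ⊢
      exact ⟨by omega, hp (by omega) hpi⟩
    simpa using card_le_card hsub

lemma prefSum_mono (r : ℕ → ℕ) : Monotone (prefSum r) := fun _ _ h =>
  Finset.sum_le_sum_of_subset (Finset.range_subset_range.mpr h)

lemma prefSum_succ (r : ℕ → ℕ) (i : ℕ) : prefSum r (i + 1) = prefSum r i + r i :=
  Finset.sum_range_succ r i

lemma lt_blk_iff (m : ℕ) (r : ℕ → ℕ) (a i : ℕ) :
    i < blk m r a ↔ i ≤ m ∧ prefSum r (i + 1) ≤ a := by
  rw [blk, Finset.lt_card_filter_range_iff, Nat.lt_succ_iff]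
  exact fun i k hik h => (prefSum_mono r (by omega)).trans h

lemma blk_le_iff_lt_prefSum {m j : ℕ} (r : ℕ → ℕ) (hjm : j ≤ m) (a : ℕ) :
    blk m r a ≤ j ↔ a < prefSum r (j + 1) := by
  rw [← not_lt, lt_blk_iff]
  simp [hjm]

lemma blk_eq_of_lt_prefSum {m j : ℕ} (r : ℕ → ℕ) (hjm : j ≤ m) {a : ℕ}
    (ha : a < prefSum r (j + 1)) : blk j r a = blk m r a := by
  refine eq_of_forall_lt_iff fun i => ?_
  rw [lt_blk_iff, lt_blk_iff]
  constructor
  · exact fun ⟨hij, hi⟩ => ⟨hij.trans hjm, hi⟩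
  · rintro ⟨-, hi⟩
    have := (prefSum_mono r).reflect_lt (hi.trans_lt ha)
    exact ⟨by omega, hi⟩

lemma prefSum_mergedSizes_one (r : ℕ → ℕ) (j : ℕ) :
    prefSum (mergedSizes r j) 1 = prefSum r 1 := by
  simp [prefSum, mergedSizes]

lemma prefSum_mergedSizes_succ (r : ℕ → ℕ) (j : ℕ) {i : ℕ} (hi : 1 ≤ i) :
    prefSum (mergedSizes r j) (i + 1) = prefSum r (i + j) := by
  induction i, hi using Nat.le_induction with
  | base =>
    simp [prefSum, Finset.sum_range_succ, Finset.sum_range_succ' r, mergedSizes,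
      ← Finset.Ico_add_one_right_eq_Icc, Finset.sum_Ico_eq_sum_range, add_comm]
  | succ i hi ih =>
    rw [prefSum_succ, ih, show i + 1 + j = i + j + 1 by omega, prefSum_succ r (i + j)]
    simp only [mergedSizes]
    rw [if_neg (by omega), if_neg (by omega), show i + 1 + j - 1 = i + j by omega]

lemma blk_mergedSizes {n j : ℕ} (r : ℕ → ℕ) (hj1 : 1 ≤ j) (hjn : j ≤ n) (c : ℕ) :
    blk (n - j + 1) (mergedSizes r j) c = min (blk n r c) 1 + (blk n r c - j) := by
  refine eq_of_forall_lt_iff fun i => ?_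
  rcases i with _ | i
  · rw [lt_blk_iff, zero_add, prefSum_mergedSizes_one]
    have := lt_blk_iff n r c 0
    rw [zero_add] at this
    omega
  · rw [lt_blk_iff, prefSum_mergedSizes_succ r j (by omega), show i + 1 + j = i + j + 1 by omega]
    have := lt_blk_iff n r c (i + j)
    omega

/-- For block sizes `r 0, …, r n > 0` with `N = r 0 + ⋯ + r n`, `n ≥ 1` and
`1 ≤ j ≤ n`, a matrix `x ∈ Mat_N(B)` is block upper triangular for `(r 0, …, r n)` iff it
is block upper triangular for the coarser partition `(r 0, r 1 + ⋯ + r j, r (j+1), …, r n)`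
and its top-left `(r 0 + ⋯ + r j) × (r 0 + ⋯ + r j)` corner is block upper triangular for
`(r 0, …, r j)`.  (Equivalently, the square of block-triangular algebras
`T(r₀,…,rₙ) → T(r₀, r₁+⋯+r_j, r_{j+1},…,rₙ)`, `T(r₀,…,r_j) → T(r₀, r₁+⋯+r_j)`
is a pullback square of rings.) -/
theorem blockTriangular_pullback {B : Type*} [Ring B] (n j N : ℕ) (r : ℕ → ℕ)
    (hj1 : 1 ≤ j) (hjn : j ≤ n)
    (hN : N = prefSum r (n + 1)) (x : Matrix (Fin N) (Fin N) B) :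
    IsBlockUpperTriangular n r x ↔
      IsBlockUpperTriangular (n - j + 1) (mergedSizes r j) x ∧
      IsBlockUpperTriangular j r (x.submatrix
        (Fin.castLE (show prefSum r (j + 1) ≤ N by
          subst hN
          exact Finset.sum_le_sum_of_subset (Finset.range_subset_range.mpr (by omega))))
        (Fin.castLE (show prefSum r (j + 1) ≤ N by
          subst hN
          exact Finset.sum_le_sum_of_subset (Finset.range_subset_range.mpr (by omega))))) := by
  simp only [IsBlockUpperTriangular, blk_mergedSizes r hj1 hjn, Matrix.submatrix_apply]
  constructor
  · intro hfine
    refine ⟨fun a b hab => hfine a b (by omega), fun a b hab => hfine _ _ ?_⟩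
    rwa [blk_eq_of_lt_prefSum r hjn a.isLt, blk_eq_of_lt_prefSum r hjn b.isLt] at hab
  · rintro ⟨hcoarse, hcorner⟩ a b hab
    by_cases hsplit : blk n r b = 0 ∨ j < blk n r a
    · exact hcoarse a b (by omega)
    · have ha := (blk_le_iff_lt_prefSum r hjn a).mp (by omega)
      have hb := (blk_le_iff_lt_prefSum r hjn b).mp (by omega)
      refine hcorner ⟨a, ha⟩ ⟨b, hb⟩ ?_
      rwa [blk_eq_of_lt_prefSum r hjn ha, blk_eq_of_lt_prefSum r hjn hb]
end

section
/- Let R be a commutative ring, S an associative unital R-algebra that is finitely generated and projective as an R-module, and A any associative unital R-algebra. Then the restriction-of-scalars functor is affine: there exist an associative unital R-algebra C and an R-algebra homomorphism u : A → S ⊗_R C such that for every associative unital R-algebra B the map sending an R-algebra homomorphism ψ : C → B to the composite (id_S ⊗ ψ) ∘ u : A → S ⊗_R B is a bijection from Hom_{Alg(R)}(C, B) onto Hom_{Alg(R)}(A, S ⊗_R B). -/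
open TensorProduct

universe u

section WeilAux

variable (R : Type u) [CommRing R] (A : Type u) [Ring A] [Algebra R A]
variable {S : Type u} [Ring S] [Algebra R S]
variable {n : ℕ} (s : Fin n → S) (f : Fin n → (S →ₗ[R] R))

/-- Relations defining the representing algebra. -/
inductive WRel : FreeAlgebra R (A × Fin n) → FreeAlgebra R (A × Fin n) → Prop
  | add (a b : A) (i : Fin n) :
      WRel (FreeAlgebra.ι R (a + b, i)) (FreeAlgebra.ι R (a, i) + FreeAlgebra.ι R (b, i))
  | smul (r : R) (a : A) (i : Fin n) :
      WRel (FreeAlgebra.ι R (r • a, i)) (r • FreeAlgebra.ι R (a, i))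
  | one (i : Fin n) :
      WRel (FreeAlgebra.ι R ((1 : A), i)) (algebraMap R _ (f i 1))
  | mul (a b : A) (j : Fin n) :
      WRel (FreeAlgebra.ι R (a * b, j))
        (∑ i, ∑ k, algebraMap R _ (f j (s i * s k)) *
          (FreeAlgebra.ι R (a, i) * FreeAlgebra.ι R (b, k)))
  | proj (a : A) (i : Fin n) :
      WRel (FreeAlgebra.ι R (a, i)) (∑ j, algebraMap R _ (f i (s j)) * FreeAlgebra.ι R (a, j))

/-- The `i`-th coordinate map `S ⊗ B → B`. -/
noncomputable def wcoord {B : Type u} [Ring B] [Algebra R B] (i : Fin n) :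
    S ⊗[R] B →ₗ[R] B :=
  TensorProduct.lift ((LinearMap.lsmul R B).comp (f i))

variable {B : Type u} [Ring B] [Algebra R B]

@[simp] lemma wcoord_tmul (i : Fin n) (x : S) (b : B) :
    wcoord R f i (x ⊗ₜ[R] b) = f i x • b := rfl

lemma sum_tmul_wcoord (hd : ∀ x : S, ∑ i, f i x • s i = x) (z : S ⊗[R] B) :
    ∑ i, s i ⊗ₜ[R] wcoord R f i z = z := by
  induction z with
  | zero => simp
  | tmul x b =>
    simp_rw [wcoord_tmul, ← TensorProduct.smul_tmul, ← TensorProduct.sum_tmul, hd]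
  | add x y hx hy => simp_rw [map_add, tmul_add, Finset.sum_add_distrib, hx, hy]

lemma tmul_expand (hd : ∀ x : S, ∑ i, f i x • s i = x) (x : S) (c : B) :
    x ⊗ₜ[R] c = ∑ j, s j ⊗ₜ[R] (f j x • c) := by
  simp_rw [← TensorProduct.smul_tmul, ← TensorProduct.sum_tmul, hd]

lemma wcoord_mul (hd : ∀ x : S, ∑ i, f i x • s i = x) (j : Fin n) (x y : S ⊗[R] B) :
    wcoord R f j (x * y) =
      ∑ i, ∑ k, f j (s i * s k) • (wcoord R f i x * wcoord R f k y) := by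
  conv_lhs => rw [← sum_tmul_wcoord R s f hd x, ← sum_tmul_wcoord R s f hd y]
  rw [Finset.sum_mul_sum]
  simp [Algebra.TensorProduct.tmul_mul_tmul]

lemma wcoord_map (C : Type u) [Ring C] [Algebra R C] (ψ : C →ₐ[R] B) (i : Fin n)
    (z : S ⊗[R] C) :
    wcoord R f i (Algebra.TensorProduct.map (AlgHom.id R S) ψ z) = ψ (wcoord R f i z) := by
  induction z with
  | zero => simp
  | tmul x c => simp [map_smul]
  | add x y hx hy => simp [map_add, hx, hy]

/-- The generators of the representing algebra. -/
noncomputable def wgen (a : A) (i : Fin n) : RingQuot (WRel R A s f) :=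
  RingQuot.mkAlgHom R (WRel R A s f) (FreeAlgebra.ι R (a, i))

lemma wgen_add (a b : A) (i : Fin n) :
    wgen R A s f (a + b) i = wgen R A s f a i + wgen R A s f b i := by
  rw [wgen, RingQuot.mkAlgHom_rel R (WRel.add a b i), map_add]; rfl

lemma wgen_smul (r : R) (a : A) (i : Fin n) :
    wgen R A s f (r • a) i = r • wgen R A s f a i := by
  rw [wgen, RingQuot.mkAlgHom_rel R (WRel.smul r a i), map_smul]; rfl

lemma wgen_one (i : Fin n) :
    wgen R A s f 1 i = algebraMap R _ (f i 1) := by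
  rw [wgen, RingQuot.mkAlgHom_rel R (WRel.one i), AlgHom.commutes]

lemma wgen_mul (a b : A) (j : Fin n) :
    wgen R A s f (a * b) j =
      ∑ i, ∑ k, f j (s i * s k) • (wgen R A s f a i * wgen R A s f b k) := by
  rw [wgen, RingQuot.mkAlgHom_rel R (WRel.mul a b j)]
  simp only [map_sum, map_smul, map_mul, AlgHom.commutes, ← Algebra.smul_def]
  rfl

lemma wgen_proj (a : A) (i : Fin n) :
    ∑ j, f i (s j) • wgen R A s f a j = wgen R A s f a i := by
  rw [wgen, RingQuot.mkAlgHom_rel R (WRel.proj a i)]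
  simp only [map_sum, map_smul, map_mul, AlgHom.commutes, ← Algebra.smul_def]
  rfl

/-- The universal map `A → S ⊗ C` as a linear map. -/
noncomputable def wuLin : A →ₗ[R] S ⊗[R] RingQuot (WRel R A s f) where
  toFun a := ∑ i, s i ⊗ₜ[R] wgen R A s f a i
  map_add' a b := by
    simp_rw [wgen_add, tmul_add, Finset.sum_add_distrib]
  map_smul' r a := by
    simp_rw [wgen_smul, tmul_smul, Finset.smul_sum, RingHom.id_apply]

lemma wuLin_apply (a : A) :
    wuLin R A s f a = ∑ i, s i ⊗ₜ[R] wgen R A s f a i := rfl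

/-- The universal map `A → S ⊗ C` as an algebra map. -/
noncomputable def wu (hd : ∀ x : S, ∑ i, f i x • s i = x) : A →ₐ[R] S ⊗[R] RingQuot (WRel R A s f) :=
  AlgHom.ofLinearMap (wuLin R A s f)
    (by
      rw [wuLin_apply]
      simp_rw [wgen_one, Algebra.algebraMap_eq_smul_one (A := RingQuot (WRel R A s f)),
        ← TensorProduct.smul_tmul, ← TensorProduct.sum_tmul, hd,
        Algebra.TensorProduct.one_def])
    (by
      intro a b
      rw [wuLin_apply, wuLin_apply, wuLin_apply, Finset.sum_mul_sum]
      simp_rw [Algebra.TensorProduct.tmul_mul_tmul, wgen_mul, tmul_sum]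
      rw [Finset.sum_comm]
      refine Finset.sum_congr rfl fun i _ => ?_
      rw [Finset.sum_comm]
      exact Finset.sum_congr rfl fun k _ => (tmul_expand R s f hd _ _).symm)

lemma wu_apply (hd : ∀ x : S, ∑ i, f i x • s i = x) (a : A) :
    wu R A s f hd a = ∑ i, s i ⊗ₜ[R] wgen R A s f a i := rfl

lemma wcoord_wu (hd : ∀ x : S, ∑ i, f i x • s i = x) (a : A) (i : Fin n) :
    wcoord R f i (wu R A s f hd a) = wgen R A s f a i := by
  rw [wu_apply, map_sum]
  simp_rw [wcoord_tmul]
  exact wgen_proj R A s f a i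

/-- Descend an algebra map `g : A → S ⊗ B` to the representing algebra. -/
noncomputable def wdown (hd : ∀ x : S, ∑ i, f i x • s i = x) (g : A →ₐ[R] S ⊗[R] B) : RingQuot (WRel R A s f) →ₐ[R] B :=
  RingQuot.liftAlgHom R ⟨FreeAlgebra.lift R (fun p => wcoord R f p.2 (g p.1)), by
    intro x y hxy
    induction hxy with
    | add a b i => simp [map_add]
    | smul r a i => simp [map_smul]
    | one i =>
      simp only [FreeAlgebra.lift_ι_apply, map_one, AlgHom.commutes,
        Algebra.TensorProduct.one_def, wcoord_tmul, Algebra.algebraMap_eq_smul_one,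
        map_smul]
    | mul a b j =>
      simp only [FreeAlgebra.lift_ι_apply, map_mul, map_sum, map_smul, AlgHom.commutes,
        ← Algebra.smul_def]
      rw [wcoord_mul R s f hd]
    | proj a i =>
      simp only [FreeAlgebra.lift_ι_apply, map_sum, map_mul, AlgHom.commutes,
        ← Algebra.smul_def]
      conv_lhs => rw [← sum_tmul_wcoord R s f hd (g a)]
      simp [map_sum]⟩

lemma wdown_gen (hd : ∀ x : S, ∑ i, f i x • s i = x) (g : A →ₐ[R] S ⊗[R] B) (a : A) (i : Fin n) :
    wdown R A s f hd g (wgen R A s f a i) = wcoord R f i (g a) := by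
  rw [wdown, wgen, RingQuot.liftAlgHom_mkAlgHom_apply, FreeAlgebra.lift_ι_apply]

end WeilAux

/-- Weil restriction of scalars along a finite projective algebra is affine.
If `S` is an `R`-algebra that is finitely generated projective as an `R`-module and `A` is
any `R`-algebra, then the functor `B ↦ Hom_{Alg(R)}(A, S ⊗_R B)` is representable:
there exist an `R`-algebra `C` and `u : A →ₐ[R] S ⊗[R] C` such that
`ψ ↦ (id_S ⊗ ψ) ∘ u` is a bijection `Hom_{Alg(R)}(C, B) ≃ Hom_{Alg(R)}(A, S ⊗[R] B)`
for every `R`-algebra `B`. -/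
theorem weil_restriction_affine {R S A : Type u} [CommRing R]
    [Ring S] [Algebra R S] [Ring A] [Algebra R A]
    [Module.Finite R S] [Module.Projective R S] :
    ∃ (C : Type u) (_ : Ring C) (_ : Algebra R C) (u : A →ₐ[R] S ⊗[R] C),
      ∀ (B : Type u) (_ : Ring B) (_ : Algebra R B),
        Function.Bijective (fun ψ : C →ₐ[R] B =>
          (Algebra.TensorProduct.map (AlgHom.id R S) ψ).comp u) := by
  obtain ⟨n, F, G, -, -, hFG⟩ := Module.Finite.exists_comp_eq_id_of_projective R S
  set s : Fin n → S := fun i => F (fun j => if i = j then 1 else 0) with hs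
  set f : Fin n → (S →ₗ[R] R) := fun i => (LinearMap.proj i).comp G with hf
  have hd : ∀ x : S, ∑ i, f i x • s i = x := by
    intro x
    have h1 : F (G x) = x := by
      have := LinearMap.congr_fun hFG x
      simpa using this
    have h2 : x = ∑ i, G x i • F fun j => if i = j then 1 else 0 := by
      conv_lhs => rw [← h1]
      exact LinearMap.pi_apply_eq_sum_univ F (G x)
    simp only [hf, hs, LinearMap.coe_comp, Function.comp_apply, LinearMap.proj_apply]
    exact h2.symm
  refine ⟨RingQuot (WRel R A s f), inferInstance, inferInstance, wu R A s f hd, ?_⟩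
  intro B _ _
  rw [Function.bijective_iff_has_inverse]
  refine ⟨fun g => wdown R A s f hd g, ?_, ?_⟩
  · intro ψ
    refine RingQuot.ringQuot_ext' _ _ _ (FreeAlgebra.hom_ext (funext fun p => ?_))
    show wdown R A s f hd _ (wgen R A s f p.1 p.2) = ψ (wgen R A s f p.1 p.2)
    rw [wdown_gen]
    show wcoord R f p.2
        (Algebra.TensorProduct.map (AlgHom.id R S) ψ (wu R A s f hd p.1)) = _
    rw [wcoord_map, wcoord_wu]
  · intro g
    ext a
    show Algebra.TensorProduct.map (AlgHom.id R S) (wdown R A s f hd g)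
        (wu R A s f hd a) = g a
    rw [wu_apply, map_sum]
    simp_rw [Algebra.TensorProduct.map_tmul, AlgHom.coe_id, id_eq, wdown_gen]
    exact sum_tmul_wcoord R s f hd (g a)
end

section
/- Let A be a (unital, possibly noncommutative) ring and n a natural number. The groupoid 𝓘(Matₙ(A)) — with objects the idempotent n×n matrices over A and morphisms from e to e′ the pairs (f, g) ∈ Matₙ(A) × Matₙ(A) with fgf = f, gfg = g, gf = e, fg = e′, composed by (f′, g′) ∘ (f, g) = (f′f, gg′) — is equivalent, via e ↦ e·Aⁿ on objects and (f, g) ↦ (left multiplication by f) on morphisms, to the groupoid whose objects are the right A-modules that are direct summands of Aⁿ and whose morphisms are right A-module isomorphisms. -/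
universe u

/-- For an `n × n` matrix `e` over `A`, the image `e·Aⁿ` of left multiplication by `e`
on column vectors, as a submodule of the free right `A`-module `Aⁿ` (a module over `Aᵐᵒᵖ`). -/
def matRange {A : Type u} [Ring A] {n : ℕ} (e : Matrix (Fin n) (Fin n) A) :
    Submodule Aᵐᵒᵖ (Fin n → A) where
  carrier := Set.range e.mulVec
  add_mem' := by
    rintro _ _ ⟨v, rfl⟩ ⟨w, rfl⟩
    exact ⟨v + w, by rw [Matrix.mulVec_add]⟩
  zero_mem' := ⟨0, Matrix.mulVec_zero e⟩
  smul_mem' := by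
    rintro c _ ⟨v, rfl⟩
    refine ⟨c • v, ?_⟩
    ext j
    simp [Matrix.mulVec, dotProduct, Finset.sum_mul, mul_assoc,
      MulOpposite.smul_eq_mul_unop]

/-!
A partial isomorphism `(f, g)` from `e` to `e'` restricts to mutually inverse maps
`e·Aⁿ ⇄ e'·Aⁿ`, and it is determined by `f` on `e·Aⁿ` because `f = f e` and partial inverses
are unique. Conversely, since `Aⁿ` is free on the unit vectors as a right `A`-module, every
right-linear endomorphism of `Aⁿ` is left multiplication by a matrix; applied to a linear
map `e·Aⁿ → e'·Aⁿ` precomposed with `e`, this gives a functor from homomorphisms to matrices,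
which turns an isomorphism and its inverse into a partial isomorphism, and turns an
idempotent endomorphism of `Aⁿ` into an idempotent matrix with the same image.
-/

open Matrix MulOpposite

structure IsPartialIso {M : Type*} [Mul M] (e e' f g : M) : Prop where
  mul_inv_mul : f * g * f = f
  inv_mul_inv : g * f * g = g
  inv_mul : g * f = e
  mul_inv : f * g = e'

namespace IsPartialIso

variable {M : Type*} [Semigroup M] {e e' f g : M}

theorem symm (h : IsPartialIso e e' f g) : IsPartialIso e' e g f :=
  ⟨h.inv_mul_inv, h.mul_inv_mul, h.mul_inv, h.inv_mul⟩

theorem mul_source (h : IsPartialIso e e' f g) : f * e = f := by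
  rw [← h.inv_mul, ← mul_assoc, h.mul_inv_mul]

theorem target_mul (h : IsPartialIso e e' f g) : e' * f = f := by
  rw [← h.mul_inv, h.mul_inv_mul]

theorem isIdempotentElem_source (h : IsPartialIso e e' f g) : IsIdempotentElem e := by
  rw [IsIdempotentElem, ← h.inv_mul, ← mul_assoc, h.inv_mul_inv]

theorem inv_unique {g' : M} (h : IsPartialIso e e' f g) (h' : IsPartialIso e e' f g') :
    g = g' :=
  calc g = g * f * g := h.inv_mul_inv.symm
    _ = g' * (f * g) := by rw [h.inv_mul, ← h'.inv_mul, mul_assoc]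
    _ = g' := by rw [h.mul_inv, ← h'.mul_inv, ← mul_assoc, h'.inv_mul_inv]

end IsPartialIso

section MatrixOfLinearMap

variable {A : Type*} [Semiring A] {m n : Type*} [Fintype n] [DecidableEq n]

def matrixOfLinearMap (φ : (n → A) →ₗ[Aᵐᵒᵖ] (m → A)) : Matrix m n A :=
  Matrix.of fun i j => φ (Pi.single j 1) i

theorem mulVec_matrixOfLinearMap (φ : (n → A) →ₗ[Aᵐᵒᵖ] (m → A)) (v : n → A) :
    matrixOfLinearMap φ *ᵥ v = φ v := by
  have hv : v = ∑ j, op (v j) • Pi.single j (1 : A) := by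
    ext i
    simp [Pi.single_apply, smul_eq_mul_unop, Finset.sum_apply]
  ext i
  conv_rhs => rw [hv]
  simp [mulVec, dotProduct, matrixOfLinearMap, Finset.sum_apply, smul_eq_mul_unop]

theorem matrixOfLinearMap_comp (φ ψ : (n → A) →ₗ[Aᵐᵒᵖ] (n → A)) :
    matrixOfLinearMap (φ ∘ₗ ψ) = matrixOfLinearMap φ * matrixOfLinearMap ψ :=
  ext_iff_mulVec.2 fun v => by simp only [← mulVec_mulVec, mulVec_matrixOfLinearMap,
    LinearMap.comp_apply]

end MatrixOfLinearMap

section MatRange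

variable {A : Type u} [Ring A] {n : ℕ}

theorem range_mulVecBilin (e : Matrix (Fin n) (Fin n) A) :
    LinearMap.range (mulVecBilin A Aᵐᵒᵖ e) = matRange e :=
  Submodule.ext fun _ => Iff.rfl

theorem matRange_matrixOfLinearMap (φ : (Fin n → A) →ₗ[Aᵐᵒᵖ] (Fin n → A)) :
    matRange (matrixOfLinearMap φ) = LinearMap.range φ :=
  Submodule.ext fun _ => exists_congr fun w => by rw [mulVec_matrixOfLinearMap]

theorem mulVec_eq_self_of_mem_matRange {e : Matrix (Fin n) (Fin n) A} (he : IsIdempotentElem e)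
    {v : Fin n → A} (hv : v ∈ matRange e) : e *ᵥ v = v := by
  obtain ⟨w, rfl⟩ := hv
  rw [mulVec_mulVec, he.eq]

theorem mulVec_mem_matRange_of_mul_eq {e f : Matrix (Fin n) (Fin n) A} (h : e * f = f)
    (v : Fin n → A) : f *ᵥ v ∈ matRange e :=
  ⟨f *ᵥ v, by rw [mulVec_mulVec, h]⟩

theorem mul_eq_mul_of_eqOn_matRange {e f f' : Matrix (Fin n) (Fin n) A}
    (h : ∀ v ∈ matRange e, f *ᵥ v = f' *ᵥ v) : f * e = f' * e :=
  ext_iff_mulVec.2 fun v => by simpa only [← mulVec_mulVec] using h _ ⟨v, rfl⟩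

theorem IsPartialIso.mulVec_inv_mulVec {e e' f g : Matrix (Fin n) (Fin n) A}
    (h : IsPartialIso e e' f g) {v : Fin n → A} (hv : v ∈ matRange e) : g *ᵥ f *ᵥ v = v := by
  rw [mulVec_mulVec, h.inv_mul, mulVec_eq_self_of_mem_matRange h.isIdempotentElem_source hv]

/-- The matrix of `u ∘ e : Aⁿ → e'·Aⁿ ⊆ Aⁿ`. -/
noncomputable def matrixOfHom {e e' : Matrix (Fin n) (Fin n) A}
    (u : matRange e →ₗ[Aᵐᵒᵖ] matRange e') : Matrix (Fin n) (Fin n) A :=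
  matrixOfLinearMap ((matRange e').subtype ∘ₗ u ∘ₗ
    (mulVecBilin A Aᵐᵒᵖ e).codRestrict (matRange e) fun v => ⟨v, rfl⟩)

variable {e e' e'' : Matrix (Fin n) (Fin n) A}

theorem mulVec_matrixOfHom (u : matRange e →ₗ[Aᵐᵒᵖ] matRange e') (v : Fin n → A) :
    matrixOfHom u *ᵥ v = u ⟨e *ᵥ v, v, rfl⟩ :=
  mulVec_matrixOfLinearMap _ v

theorem mulVec_matrixOfHom_of_mem (he : IsIdempotentElem e)
    (u : matRange e →ₗ[Aᵐᵒᵖ] matRange e') (v : matRange e) :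
    matrixOfHom u *ᵥ (v : Fin n → A) = u v := by
  rw [mulVec_matrixOfHom]
  congr 2
  exact Subtype.ext (mulVec_eq_self_of_mem_matRange he v.2)

theorem matrixOfHom_id :
    matrixOfHom (LinearMap.id : matRange e →ₗ[Aᵐᵒᵖ] matRange e) = e :=
  ext_iff_mulVec.2 fun v => mulVec_matrixOfHom _ v

theorem matrixOfHom_comp (he' : IsIdempotentElem e') (u : matRange e →ₗ[Aᵐᵒᵖ] matRange e')
    (u' : matRange e' →ₗ[Aᵐᵒᵖ] matRange e'') :
    matrixOfHom (u' ∘ₗ u) = matrixOfHom u' * matrixOfHom u :=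
  ext_iff_mulVec.2 fun v => by
    rw [← mulVec_mulVec, mulVec_matrixOfHom u, mulVec_matrixOfHom_of_mem he', mulVec_matrixOfHom,
      LinearMap.comp_apply]

theorem mul_matrixOfHom (he' : IsIdempotentElem e') (u : matRange e →ₗ[Aᵐᵒᵖ] matRange e') :
    e' * matrixOfHom u = matrixOfHom u := by
  have h := matrixOfHom_comp he' u LinearMap.id
  rwa [LinearMap.id_comp, matrixOfHom_id, eq_comm] at h

theorem isPartialIso_matrixOfHom (he : IsIdempotentElem e) (he' : IsIdempotentElem e')
    (u : matRange e ≃ₗ[Aᵐᵒᵖ] matRange e') :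
    IsPartialIso e e' (matrixOfHom u.toLinearMap) (matrixOfHom u.symm.toLinearMap) := by
  have hgf := matrixOfHom_comp he' u.toLinearMap u.symm.toLinearMap
  have hfg := matrixOfHom_comp he u.symm.toLinearMap u.toLinearMap
  rw [u.symm_comp, matrixOfHom_id] at hgf
  rw [u.comp_symm, matrixOfHom_id] at hfg
  refine ⟨?_, ?_, hgf.symm, hfg.symm⟩
  · rw [← hfg, mul_matrixOfHom he']
  · rw [← hgf, mul_matrixOfHom he]

end MatRange

/-- The groupoid `𝓘(Matₙ(A))` of idempotent `n × n` matrices and partial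
isomorphisms is equivalent, via `e ↦ e·Aⁿ` on objects and `(f, g) ↦` (left multiplication
by `f`) on morphisms, to the groupoid of right `A`-modules that are direct summands
of `Aⁿ`, with right `A`-module isomorphisms as morphisms.  This is expressed by:
the object map lands in direct summands of `Aⁿ`; the morphism map is well defined,
functorial, fully faithful on isomorphisms; and every direct summand of `Aⁿ` is
isomorphic to some `e·Aⁿ` (essential surjectivity). -/
theorem idempotent_groupoid_equiv_summands {A : Type u} [Ring A] (n : ℕ) :
    -- (i) e·Aⁿ is a direct summand of Aⁿ: the image of an idempotent endomorphism
    (∀ e : Matrix (Fin n) (Fin n) A, IsIdempotentElem e →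
      ∃ π : (Fin n → A) →ₗ[Aᵐᵒᵖ] (Fin n → A),
        π ∘ₗ π = π ∧ LinearMap.range π = matRange e) ∧
    -- (ii) functoriality: identities go to identities
    (∀ e : Matrix (Fin n) (Fin n) A, IsIdempotentElem e →
      ∀ v ∈ matRange e, e.mulVec v = v) ∧
    -- (ii') functoriality: composition goes to composition
    (∀ f f' : Matrix (Fin n) (Fin n) A, ∀ v : Fin n → A,
      (f' * f).mulVec v = f'.mulVec (f.mulVec v)) ∧
    -- (iii) a partial isomorphism (f, g) from e to e′ induces an isomorphism
    --       e·Aⁿ → e′·Aⁿ (left mult. by f) with inverse left mult. by g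
    (∀ e e' f g : Matrix (Fin n) (Fin n) A,
      IsIdempotentElem e → IsIdempotentElem e' →
      f * g * f = f → g * f * g = g → g * f = e → f * g = e' →
      (∀ v ∈ matRange e, f.mulVec v ∈ matRange e') ∧
      (∀ v ∈ matRange e', g.mulVec v ∈ matRange e) ∧
      (∀ v ∈ matRange e, g.mulVec (f.mulVec v) = v) ∧
      (∀ v ∈ matRange e', f.mulVec (g.mulVec v) = v)) ∧
    -- (iv) faithfulness
    (∀ e e' f g f' g' : Matrix (Fin n) (Fin n) A,
      IsIdempotentElem e → IsIdempotentElem e' →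
      f * g * f = f → g * f * g = g → g * f = e → f * g = e' →
      f' * g' * f' = f' → g' * f' * g' = g' → g' * f' = e → f' * g' = e' →
      (∀ v ∈ matRange e, f.mulVec v = f'.mulVec v) → f = f' ∧ g = g') ∧
    -- (v) fullness on isomorphisms
    (∀ e e' : Matrix (Fin n) (Fin n) A, IsIdempotentElem e → IsIdempotentElem e' →
      ∀ u : matRange e →ₗ[Aᵐᵒᵖ] matRange e', Function.Bijective u →
      ∃ f g : Matrix (Fin n) (Fin n) A,
        f * g * f = f ∧ g * f * g = g ∧ g * f = e ∧ f * g = e' ∧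
        ∀ v : matRange e, (u v : Fin n → A) = f.mulVec (v : Fin n → A)) ∧
    -- (vi) essential surjectivity: any right A-module which is a direct summand of Aⁿ
    --      is isomorphic to e·Aⁿ for some idempotent e
    (∀ (M : Type u) [AddCommGroup M] [Module Aᵐᵒᵖ M],
      (∃ π : (Fin n → A) →ₗ[Aᵐᵒᵖ] (Fin n → A),
        π ∘ₗ π = π ∧ Nonempty (M ≃ₗ[Aᵐᵒᵖ] LinearMap.range π)) →
      ∃ e : Matrix (Fin n) (Fin n) A, IsIdempotentElem e ∧
        Nonempty (M ≃ₗ[Aᵐᵒᵖ] matRange e)) := by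
  refine ⟨fun e he => ?_, fun e he v hv => mulVec_eq_self_of_mem_matRange he hv,
    fun f f' v => (mulVec_mulVec v f' f).symm, ?_, ?_, ?_, ?_⟩
  · refine ⟨mulVecBilin A Aᵐᵒᵖ e, LinearMap.ext fun v => ?_, range_mulVecBilin e⟩
    simp [mulVec_mulVec, he.eq]
  · intro e e' f g _ _ hfgf hgfg hgf hfg
    have h : IsPartialIso e e' f g := ⟨hfgf, hgfg, hgf, hfg⟩
    exact ⟨fun v _ => mulVec_mem_matRange_of_mul_eq h.target_mul v,
      fun v _ => mulVec_mem_matRange_of_mul_eq h.symm.target_mul v,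
      fun v hv => h.mulVec_inv_mulVec hv, fun v hv => h.symm.mulVec_inv_mulVec hv⟩
  · intro e e' f g f' g' _ _ hfgf hgfg hgf hfg hfgf' hgfg' hgf' hfg' hagree
    have h : IsPartialIso e e' f g := ⟨hfgf, hgfg, hgf, hfg⟩
    have h' : IsPartialIso e e' f' g' := ⟨hfgf', hgfg', hgf', hfg'⟩
    have hff' : f = f' := by
      rw [← h.mul_source, ← h'.mul_source, mul_eq_mul_of_eqOn_matRange hagree]
    subst hff'
    exact ⟨rfl, h.inv_unique h'⟩
  · intro e e' he he' u hu
    obtain ⟨hfgf, hgfg, hgf, hfg⟩ :=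
      isPartialIso_matrixOfHom he he' (LinearEquiv.ofBijective u hu)
    exact ⟨_, _, hfgf, hgfg, hgf, hfg, fun v => (mulVec_matrixOfHom_of_mem he u v).symm⟩
  · rintro M _ _ ⟨π, hπ, ⟨iso⟩⟩
    refine ⟨matrixOfLinearMap π, ?_, ⟨iso.trans (LinearEquiv.ofEq _ _ ?_)⟩⟩
    · rw [IsIdempotentElem, ← matrixOfLinearMap_comp, hπ]
    · exact (matRange_matrixOfLinearMap π).symm
end
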